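/- Let k be a field, G a group, and V a k-vector space with a representation ρ : G → GL(V) that is irreducible, i.e. V ≠ 0 and the only ρ-invariant k-subspaces of V are 0 and V. Let N : V → V be a nilpotent k-linear endomorphism and suppose there exists a function c : G → kˣ of invertible scalars such that ρ(g) ∘ N = c(g) • (N ∘ ρ(g)) for all g ∈ G. Then N = 0. -/

import Mathlib

/-! Since `c(g)` is a unit, `ρ(g)` maps `ker N` into `ker (c(g) • N) = ker N`, so `ker N` is
`ρ`-stable and hence `0` or `V`. It cannot be `0` unless `V = 0`: an injective nilpotent
endomorphism only lives on the zero space. -/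

namespace Module.End

theorem eq_zero_of_isNilpotent_of_injective {R M : Type*} [Semiring R] [AddCommMonoid M]
    [Module R M] {f : End R M} (hf : IsNilpotent f) (hinj : Function.Injective f) : f = 0 := by
  obtain ⟨n, hn⟩ := hf
  have hpow : Function.Injective (f ^ n) := by
    rw [coe_pow]
    exact hinj.iterate n
  have : Subsingleton M := ⟨fun x y => hpow (by rw [hn]; rfl)⟩
  exact Subsingleton.elim f 0

theorem ker_map_le_ker_of_comp_eq_smul_comp {R M : Type*} [CommSemiring R] [AddCommMonoid M]
    [Module R M] {f g : End R M} (a : Rˣ) (h : g ∘ₗ f = (a : R) • (f ∘ₗ g)) :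
    (LinearMap.ker f).map g ≤ LinearMap.ker f := by
  rintro _ ⟨x, hx, rfl⟩
  have hgx : (a : R) • f (g x) = 0 :=
    calc (a : R) • f (g x) = g (f x) := (LinearMap.congr_fun h x).symm
      _ = 0 := by rw [LinearMap.mem_ker.mp hx, map_zero]
  exact a.isUnit.smul_eq_zero.mp hgx

end Module.End

theorem nilpotent_scaled_commuting_with_irreducible_eq_zero_general
    {k : Type*} [Field k] {V : Type*} [AddCommGroup V] [Module k V]
    {G : Type*} [Group G] (ρ : G →* (V →ₗ[k] V)ˣ)
    (hirr : ∀ U : Submodule k V, (∀ g : G, U.map (ρ g : V →ₗ[k] V) ≤ U) → U = ⊥ ∨ U = ⊤)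
    (N : V →ₗ[k] V) (hN : IsNilpotent N)
    (c : G → kˣ)
    (hc : ∀ g : G, (ρ g : V →ₗ[k] V) ∘ₗ N = (c g : k) • (N ∘ₗ (ρ g : V →ₗ[k] V))) :
    N = 0 := by
  rcases hirr (LinearMap.ker N)
      (fun g => Module.End.ker_map_le_ker_of_comp_eq_smul_comp (c g) (hc g)) with hker | hker
  · exact Module.End.eq_zero_of_isNilpotent_of_injective hN (LinearMap.ker_eq_bot.mp hker)
  · exact LinearMap.ker_eq_top.mp hker

/-- If `ρ : G → GL(V)` is an irreducible representation over a field `k`, `N : V → V` is a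
nilpotent `k`-linear endomorphism, and there is a function `c : G → kˣ` with
`ρ(g) ∘ N = c(g) • (N ∘ ρ(g))` for all `g`, then `N = 0`. -/
theorem nilpotent_scaled_commuting_with_irreducible_eq_zero
    {k : Type*} [Field k] {V : Type*} [AddCommGroup V] [Module k V]
    {G : Type*} [Group G] (ρ : G →* (V →ₗ[k] V)ˣ)
    (hnt : Nontrivial V)
    (hirr : ∀ U : Submodule k V, (∀ g : G, U.map (ρ g : V →ₗ[k] V) ≤ U) → U = ⊥ ∨ U = ⊤)
    (N : V →ₗ[k] V) (hN : IsNilpotent N)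
    (c : G → kˣ)
    (hc : ∀ g : G, (ρ g : V →ₗ[k] V) ∘ₗ N = (c g : k) • (N ∘ₗ (ρ g : V →ₗ[k] V))) :
    N = 0 :=
  nilpotent_scaled_commuting_with_irreducible_eq_zero_general ρ hirr N hN c hc
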